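/- There exist constants C > 0 and P* > 0 such that for all P ≥ P*, |Pout(P) − εs^M/P^M| ≤ C/P^{M+1}; that is, at high SNR with equal powers P0 = Ps = P, the HSIC-PA outage probability equals εs^M/P^M up to an error of order P^{−(M+1)}. -/

import Mathlib

/-!
Conditioned on the primary gain `G = g`, a secondary user is in outage exactly when its gain lies
below a threshold `F(g)` (`outageThreshold`), so `Pout = E[(1 - e^{-F(G)})^M]` with the `M` users
independent. On `G ≥ g* = α₀(1 + εs) = ε₀(1 + εs)/P`, an event of probability `e^{-g*} ≥ 1 - g*`,
the threshold is `εs/P`; on `G < g*`, an event of probability at most `g*`, it is still `O(1/P)`.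
Bounding `a e^{-a} ≤ 1 - e^{-a} ≤ a` then gives `Pout = (εs/P)^M + O(P^{-(M+1)})`, uniformly
for all `P > 0`.
-/

open MeasureTheory ProbabilityTheory Real Filter

/-- The interference threshold `τ(g) = max{0, g/α₀ − 1}`. -/
noncomputable def tau (α0 g : ℝ) : ℝ := max 0 (g / α0 - 1)

/-- The HSIC-PA achievable rate of a secondary user with channel gain `h`,
given the primary channel gain `g`. -/
noncomputable def rateHSIC (P0 Ps α0 h g : ℝ) : ℝ :=
  if Ps * h ≤ tau α0 g then Real.logb 2 (1 + Ps * h)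
  else max (Real.logb 2 (1 + Ps * h / (P0 * g + 1))) (Real.logb 2 (1 + tau α0 g))

/-- The HSIC-PA overall outage probability with equal powers `P0 = Ps = P`, realized on
the canonical probability space carrying `M + 1` i.i.d. rate-one exponential random
variables: coordinate `0` is the primary channel gain `G = |g|²` and coordinates
`1, …, M` are the secondary channel gains `H₁, …, H_M`. -/
noncomputable def outageHSIC (M : ℕ) (R0 Rs P : ℝ) : ℝ :=
  haveI : IsProbabilityMeasure (expMeasure 1) := isProbabilityMeasure_expMeasure one_pos
  ((Measure.pi fun _ : Fin (M + 1) => expMeasure 1)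
    {ω | (⨆ m : Fin M, rateHSIC P P ((2 ^ R0 - 1) / P) (ω m.succ) (ω 0)) < Rs}).toReal

open Set

/- `0 < a` covers the empty index type, where `⨆ i, f i = 0`. -/
lemma Real.iSup_lt_iff_of_finite {ι : Type*} [Finite ι] {f : ι → ℝ} {a : ℝ} (ha : 0 < a) :
    (⨆ i, f i) < a ↔ ∀ i, f i < a := by
  rcases isEmpty_or_nonempty ι with hι | hι
  · simp [Real.iSup_of_isEmpty, ha]
  · obtain ⟨j, hj⟩ := Finite.exists_max f
    exact ⟨fun h i => (le_ciSup (finite_range f).bddAbove i).trans_lt h,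
      fun h => (ciSup_le hj).trans_lt (h j)⟩

section ExpMeasure

variable {r : ℝ}

lemma expMeasure_singleton (x : ℝ) : expMeasure r {x} = 0 :=
  withDensity_absolutelyContinuous _ _ (measure_singleton x)

lemma expMeasure_Iio (hr : 0 < r) (x : ℝ) :
    expMeasure r (Iio x) = ENNReal.ofReal (if 0 ≤ x then 1 - exp (-(r * x)) else 0) := by
  have := isProbabilityMeasure_expMeasure hr
  rw [measure_congr (Iio_ae_eq_Iic' (expMeasure_singleton x)), ← ofReal_cdf,
    cdf_expMeasure_eq hr]

lemma expMeasure_Iio_le (hr : 0 < r) (x : ℝ) : expMeasure r (Iio x) ≤ ENNReal.ofReal (r * x) := by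
  rw [expMeasure_Iio hr]
  split_ifs
  · exact ENNReal.ofReal_le_ofReal (by linarith [add_one_le_exp (-(r * x))])
  · simp

lemma expMeasure_Ici (hr : 0 < r) {x : ℝ} (hx : 0 ≤ x) :
    expMeasure r (Ici x) = ENNReal.ofReal (exp (-(r * x))) := by
  have := isProbabilityMeasure_expMeasure hr
  rw [← compl_Iio, prob_compl_eq_one_sub measurableSet_Iio, expMeasure_Iio hr, if_pos hx,
    ← ENNReal.ofReal_one,
    ← ENNReal.ofReal_sub _ (sub_nonneg.2 (exp_le_one_iff.2 (neg_nonpos.2 (mul_nonneg hr.le hx)))),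
    sub_sub_cancel]

lemma ae_nonneg_expMeasure (hr : 0 < r) : ∀ᵐ x ∂expMeasure r, 0 ≤ x := by
  rw [ae_iff]
  simp_rw [not_le]
  rw [Iio_def, expMeasure_Iio hr]
  simp

end ExpMeasure

lemma measure_pi_forall_succ_lt {M : ℕ} (μ : Measure ℝ) [SigmaFinite μ] {F : ℝ → ℝ}
    (hF : Measurable F) :
    Measure.pi (fun _ : Fin (M + 1) => μ) {ω | ∀ m : Fin M, ω m.succ < F (ω 0)}
      = ∫⁻ g, μ (Iio (F g)) ^ M ∂μ := by
  set T : Set (ℝ × (Fin M → ℝ)) := {p | ∀ m, p.2 m < F p.1}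
  have hT : MeasurableSet T := by
    simp only [T, ofPred_forall]
    exact .iInter fun m =>
      measurableSet_lt ((measurable_pi_apply m).comp measurable_snd) (hF.comp measurable_fst)
  have hpre : {ω : Fin (M + 1) → ℝ | ∀ m : Fin M, ω m.succ < F (ω 0)}
      = MeasurableEquiv.piFinSuccAbove (fun _ => ℝ) 0 ⁻¹' T := by
    ext ω
    simp [T, MeasurableEquiv.piFinSuccAbove, Fin.tail]
  rw [hpre, (measurePreserving_piFinSuccAbove _ 0).measure_preimage hT.nullMeasurableSet,
    Measure.prod_apply hT]
  refine lintegral_congr fun g => ?_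
  have hslice : Prod.mk g ⁻¹' T = univ.pi fun _ => Iio (F g) := by
    ext; simp [T]
  simp [hslice, Measure.pi_pi]

lemma tau_lt_iff {α0 ε g : ℝ} (hα0 : 0 < α0) (hε : 0 < ε) : tau α0 g < ε ↔ g < α0 * (1 + ε) := by
  rw [tau, max_lt_iff, sub_lt_iff_lt_add', div_lt_iff₀ hα0, mul_comm]
  exact and_iff_right hε

/- When `τ(g) < εs` the user reaches `Rs` only by decoding its own signal with the primary one
as noise, i.e. iff `Ps h ≥ εs (P0 g + 1)`; otherwise `log₂(1 + τ(g)) ≥ Rs` is available as soon as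
`Ps h > τ(g)`, so the user is in outage iff `Ps h < εs`. -/
noncomputable def outageThreshold (P0 Ps α0 εs g : ℝ) : ℝ :=
  if tau α0 g < εs then εs * (P0 * g + 1) / Ps else εs / Ps

lemma measurable_outageThreshold (P0 Ps α0 εs : ℝ) : Measurable (outageThreshold P0 Ps α0 εs) :=
  Measurable.ite (measurableSet_lt (by unfold tau; fun_prop) measurable_const) (by fun_prop)
    measurable_const

lemma rateHSIC_lt_logb_iff {P0 Ps α0 εs h g : ℝ} (hP0 : 0 ≤ P0) (hPs : 0 < Ps) (hεs : 0 < εs)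
    (hh : 0 ≤ h) (hg : 0 ≤ g) :
    rateHSIC P0 Ps α0 h g < logb 2 (1 + εs) ↔ h < outageThreshold P0 Ps α0 εs g := by
  have ht : 0 ≤ tau α0 g := le_max_left _ _
  have hx : 0 ≤ Ps * h := by positivity
  have hs : 1 ≤ P0 * g + 1 := by nlinarith
  have hlt : ∀ {x}, 0 ≤ x → (logb 2 (1 + x) < logb 2 (1 + εs) ↔ x < εs) := fun hx0 => by
    rw [logb_lt_logb_iff one_lt_two (by linarith) (by linarith), add_lt_add_iff_left]
  rw [rateHSIC, outageThreshold]
  split_ifs with hxt hτ hτ <;> rw [lt_div_iff₀ hPs]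
  · rw [hlt hx]
    exact iff_of_true (hxt.trans_lt hτ) (by nlinarith)
  · rw [hlt hx, mul_comm]
  · rw [max_lt_iff, hlt (by positivity), hlt ht, div_lt_iff₀ (by linarith), mul_comm]
    exact and_iff_left hτ
  · rw [max_lt_iff, hlt ht]
    exact iff_of_false (fun h => hτ h.2) (by linarith [not_le.1 hxt, not_lt.1 hτ])

lemma outageThreshold_le {P0 Ps α0 εs g : ℝ} (hP0 : 0 ≤ P0) (hPs : 0 < Ps) (hα0 : 0 < α0)
    (hεs : 0 < εs) (hg : g < α0 * (1 + εs)) :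
    outageThreshold P0 Ps α0 εs g ≤ εs * (P0 * (α0 * (1 + εs)) + 1) / Ps := by
  rw [outageThreshold, if_pos ((tau_lt_iff hα0 hεs).2 hg)]
  gcongr

lemma outageThreshold_of_le {P0 Ps α0 εs g : ℝ} (hα0 : 0 < α0) (hεs : 0 < εs)
    (hg : α0 * (1 + εs) ≤ g) : outageThreshold P0 Ps α0 εs g = εs / Ps := by
  rw [outageThreshold, if_neg ((tau_lt_iff hα0 hεs).not.2 hg.not_gt)]

lemma lintegral_outageThreshold_le {P0 Ps α0 εs : ℝ} (M : ℕ) (hP0 : 0 ≤ P0) (hPs : 0 < Ps)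
    (hα0 : 0 < α0) (hεs : 0 < εs) :
    ∫⁻ g, expMeasure 1 (Iio (outageThreshold P0 Ps α0 εs g)) ^ M ∂expMeasure 1
      ≤ ENNReal.ofReal ((εs * (P0 * (α0 * (1 + εs)) + 1) / Ps) ^ M * (α0 * (1 + εs))
          + (εs / Ps) ^ M) := by
  have := isProbabilityMeasure_expMeasure one_pos
  have hIio (x : ℝ) : expMeasure 1 (Iio x) ≤ ENNReal.ofReal x := by
    simpa using expMeasure_Iio_le one_pos x
  set gs := α0 * (1 + εs)
  set A := εs * (P0 * gs + 1) / Ps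
  have hpt (g : ℝ) : expMeasure 1 (Iio (outageThreshold P0 Ps α0 εs g)) ^ M
      ≤ (Iio gs).indicator (fun _ => ENNReal.ofReal A ^ M) g + ENNReal.ofReal (εs / Ps) ^ M := by
    by_cases hg : g ∈ Iio gs
    · rw [indicator_of_mem hg]
      refine le_add_right (pow_le_pow_left₀ zero_le ?_ M)
      exact (hIio _).trans (ENNReal.ofReal_le_ofReal (outageThreshold_le hP0 hPs hα0 hεs hg))
    · rw [indicator_of_notMem hg, zero_add, outageThreshold_of_le hα0 hεs (not_lt.1 hg)]
      exact pow_le_pow_left₀ zero_le (hIio _) M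
  calc _ ≤ ∫⁻ g, (Iio gs).indicator (fun _ => ENNReal.ofReal A ^ M) g
          + ENNReal.ofReal (εs / Ps) ^ M ∂expMeasure 1 := lintegral_mono hpt
    _ = ENNReal.ofReal A ^ M * expMeasure 1 (Iio gs) + ENNReal.ofReal (εs / Ps) ^ M := by
      rw [lintegral_add_right _ measurable_const, lintegral_indicator measurableSet_Iio,
        setLIntegral_const, lintegral_const, measure_univ, mul_one]
    _ ≤ ENNReal.ofReal A ^ M * ENNReal.ofReal gs + ENNReal.ofReal (εs / Ps) ^ M := by
      gcongr
      exact hIio gs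
    _ = _ := by
      rw [← ENNReal.ofReal_pow (by positivity), ← ENNReal.ofReal_pow (by positivity),
        ← ENNReal.ofReal_mul (by positivity), ← ENNReal.ofReal_add (by positivity) (by positivity)]

lemma ofReal_le_lintegral_outageThreshold {P0 Ps α0 εs : ℝ} (M : ℕ) (hPs : 0 < Ps)
    (hα0 : 0 < α0) (hεs : 0 < εs) :
    ENNReal.ofReal ((1 - exp (-(εs / Ps))) ^ M * exp (-(α0 * (1 + εs))))
      ≤ ∫⁻ g, expMeasure 1 (Iio (outageThreshold P0 Ps α0 εs g)) ^ M ∂expMeasure 1 := by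
  set gs := α0 * (1 + εs)
  have hgs : 0 ≤ gs := by positivity
  have hthr : 0 ≤ εs / Ps := by positivity
  have hA : 0 ≤ 1 - exp (-(εs / Ps)) := sub_nonneg.2 (exp_le_one_iff.2 (by linarith))
  calc _ = ∫⁻ g, (Ici gs).indicator (fun _ => ENNReal.ofReal (1 - exp (-(εs / Ps))) ^ M) g
          ∂expMeasure 1 := by
        rw [lintegral_indicator measurableSet_Ici, setLIntegral_const, expMeasure_Ici one_pos hgs,
          one_mul, ENNReal.ofReal_mul (pow_nonneg hA M), ENNReal.ofReal_pow hA]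
    _ ≤ _ := by
      refine lintegral_mono fun g => ?_
      by_cases hg : g ∈ Ici gs
      · rw [indicator_of_mem hg, outageThreshold_of_le hα0 hεs hg, expMeasure_Iio one_pos,
          if_pos hthr, one_mul]
      · rw [indicator_of_notMem hg]
        exact zero_le

lemma pow_mul_one_sub_le_one_sub_exp_neg_pow_mul_exp_neg {a : ℝ} (ha : 0 ≤ a) (b : ℝ) (M : ℕ) :
    a ^ M * (1 - (M * a + b)) ≤ (1 - exp (-a)) ^ M * exp (-b) := by
  have hexp : a * exp (-a) ≤ 1 - exp (-a) := by
    have : exp (-a) * exp a = 1 := by rw [← exp_add, neg_add_cancel, exp_zero]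
    nlinarith [add_one_le_exp a, exp_pos (-a)]
  calc a ^ M * (1 - (M * a + b)) ≤ a ^ M * exp (-(M * a + b)) := by
        gcongr
        exact one_sub_le_exp_neg _
    _ = (a * exp (-a)) ^ M * exp (-b) := by
        rw [mul_pow, ← exp_nat_mul, mul_assoc, ← exp_add]
        ring_nf
    _ ≤ (1 - exp (-a)) ^ M * exp (-b) := by
        gcongr

lemma two_rpow_sub_one_pos {R : ℝ} (hR : 0 < R) : 0 < (2 : ℝ) ^ R - 1 :=
  sub_pos.2 (one_lt_rpow one_lt_two hR)

lemma ofReal_outageHSIC (M : ℕ) {R0 Rs P ε0 εs : ℝ} (hRs : 0 < Rs) (hP : 0 < P)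
    (hε0 : ε0 = 2 ^ R0 - 1) (hεs : εs = 2 ^ Rs - 1) :
    ENNReal.ofReal (outageHSIC M R0 Rs P)
      = ∫⁻ g, expMeasure 1 (Iio (outageThreshold P P (ε0 / P) εs g)) ^ M ∂expMeasure 1 := by
  subst hε0 hεs
  have := isProbabilityMeasure_expMeasure one_pos
  have hRs_eq : Rs = logb 2 (1 + (2 ^ Rs - 1)) := by
    rw [add_sub_cancel, logb_rpow two_pos (by norm_num)]
  have hnonneg : ∀ᵐ ω ∂Measure.pi (fun _ : Fin (M + 1) => expMeasure 1), ∀ i, 0 ≤ ω i :=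
    ae_all_iff.2 fun i => Measure.tendsto_eval_ae_ae.eventually (ae_nonneg_expMeasure one_pos)
  rw [outageHSIC, ENNReal.ofReal_toReal (measure_ne_top _ _),
    ← measure_pi_forall_succ_lt _ (measurable_outageThreshold _ _ _ _)]
  refine measure_congr (eventuallyEq_set.2 ?_)
  filter_upwards [hnonneg] with ω hω
  rw [Real.iSup_lt_iff_of_finite hRs]
  refine forall_congr' fun m => ?_
  have h := rateHSIC_lt_logb_iff (α0 := (2 ^ R0 - 1) / P) hP.le hP (two_rpow_sub_one_pos hRs)
    (hω m.succ) (hω 0)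
  rwa [← hRs_eq] at h

lemma outageHSIC_le (M : ℕ) {R0 Rs P ε0 εs : ℝ} (hR0 : 0 < R0) (hRs : 0 < Rs) (hP : 0 < P)
    (hε0 : ε0 = 2 ^ R0 - 1) (hεs : εs = 2 ^ Rs - 1) :
    outageHSIC M R0 Rs P
      ≤ εs ^ M / P ^ M + (εs * (ε0 * (1 + εs) + 1)) ^ M * (ε0 * (1 + εs)) / P ^ (M + 1) := by
  have hε0pos : 0 < ε0 := hε0 ▸ two_rpow_sub_one_pos hR0
  have hεspos : 0 < εs := hεs ▸ two_rpow_sub_one_pos hRs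
  have h := (ofReal_outageHSIC M hRs hP hε0 hεs).trans_le
    (lintegral_outageThreshold_le M hP.le hP (div_pos hε0pos hP) hεspos)
  rw [ENNReal.ofReal_le_ofReal_iff (by positivity)] at h
  convert h using 1
  have hgs : P * (ε0 / P * (1 + εs)) = ε0 * (1 + εs) := by field_simp
  rw [hgs, div_pow, div_pow, pow_succ]
  field_simp
  ring

lemma le_outageHSIC (M : ℕ) {R0 Rs P ε0 εs : ℝ} (hR0 : 0 < R0) (hRs : 0 < Rs) (hP : 0 < P)
    (hε0 : ε0 = 2 ^ R0 - 1) (hεs : εs = 2 ^ Rs - 1) :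
    εs ^ M / P ^ M - (M * εs ^ (M + 1) + εs ^ M * (ε0 * (1 + εs))) / P ^ (M + 1)
      ≤ outageHSIC M R0 Rs P := by
  have hε0pos : 0 < ε0 := hε0 ▸ two_rpow_sub_one_pos hR0
  have hεspos : 0 < εs := hεs ▸ two_rpow_sub_one_pos hRs
  have h := (ofReal_le_lintegral_outageThreshold (P0 := P) M hP (div_pos hε0pos hP)
    hεspos).trans_eq (ofReal_outageHSIC M hRs hP hε0 hεs).symm
  have hout : 0 ≤ outageHSIC M R0 Rs P := ENNReal.toReal_nonneg
  rw [ENNReal.ofReal_le_ofReal_iff hout] at h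
  refine le_trans (le_of_eq ?_) ((pow_mul_one_sub_le_one_sub_exp_neg_pow_mul_exp_neg
    (by positivity) (ε0 / P * (1 + εs)) M).trans h)
  rw [div_pow, pow_succ]
  field_simp
  ring

theorem hsic_pa_outage_high_snr_approx_general
    (M : ℕ) (R0 Rs : ℝ) (hR0 : 0 < R0) (hRs : 0 < Rs)
    (εs : ℝ) (hεs : εs = 2 ^ Rs - 1) :
    ∃ C > (0 : ℝ), ∃ Pstar > (0 : ℝ), ∀ P ≥ Pstar,
      |outageHSIC M R0 Rs P - εs ^ M / P ^ M| ≤ C / P ^ (M + 1) := by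
  set ε0 : ℝ := 2 ^ R0 - 1 with hε0
  have hε0pos : 0 < ε0 := two_rpow_sub_one_pos hR0
  have hεspos : 0 < εs := hεs ▸ two_rpow_sub_one_pos hRs
  set U := (εs * (ε0 * (1 + εs) + 1)) ^ M * (ε0 * (1 + εs))
  set L := M * εs ^ (M + 1) + εs ^ M * (ε0 * (1 + εs))
  refine ⟨U + L, by positivity, 1, one_pos, fun P hP => ?_⟩
  have hP0 : 0 < P := one_pos.trans_le hP
  have hup := outageHSIC_le M hR0 hRs hP0 hε0 hεs
  have hlo := le_outageHSIC M hR0 hRs hP0 hε0 hεs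
  have hU : 0 ≤ U / P ^ (M + 1) := by positivity
  have hL : 0 ≤ L / P ^ (M + 1) := by positivity
  rw [abs_sub_le_iff, add_div]
  constructor <;> linarith

/-- at high SNR with `P0 = Ps = P`, the HSIC-PA outage probability equals
`εs^M / P^M` up to an error of order `P^{-(M+1)}`. -/
theorem hsic_pa_outage_high_snr_approx
    (M : ℕ) (hM : 1 ≤ M) (R0 Rs : ℝ) (hR0 : 0 < R0) (hRs : 0 < Rs)
    (εs : ℝ) (hεs : εs = 2 ^ Rs - 1) :
    ∃ C > (0 : ℝ), ∃ Pstar > (0 : ℝ), ∀ P ≥ Pstar,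
      |outageHSIC M R0 Rs P - εs ^ M / P ^ M| ≤ C / P ^ (M + 1) :=
  hsic_pa_outage_high_snr_approx_general M R0 Rs hR0 hRs εs hεs
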